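/- arXiv:2106.11553 — 4 statements merged into one kernel-verified Lean document; each statement's English description precedes it below -/
import Mathlib

section
/- Let Z be a finite abelian group and let (A₁,B₁,(·,·)₁), (A₂,B₂,(·,·)₂), α, β form a commutative diagram of pairings valued in Z, with induced Coker–Ker pairing (·,·)_{CK} : Coker(α) × Ker(β) → Z. Suppose that the quotient map π: A₂ → Coker(α) splits, i.e. there is a continuous group homomorphism s: Coker(α) → A₂ with π ∘ s = id, that the right kernel of (·,·)₁ is trivial, and that (·,·)₂ is right-surjective. Then (·,·)_{CK} is right-surjective: for every continuous homomorphism λ₀: Coker(α) → Z there exists b ∈ Ker(β) with λ₀(x) = (x, b)_{CK} for all x ∈ Coker(α). -/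
/-!
Pull `λ₀` back along `π` to a continuous character of `A₂`; right-surjectivity of the second
pairing represents it by some `b ∈ B₂`. That `b` pairs trivially with `α(A₁)`, so by
commutativity of the diagram `β b` pairs trivially with all of `A₁`, hence `β b = 0`.
-/

theorem mem_ker_of_pairing_range_eq_zero {Z A₁ B₁ A₂ B₂ : Type*} [AddCommGroup Z]
    [AddCommGroup A₁] [AddCommGroup A₂] [AddCommGroup B₁] [AddCommGroup B₂]
    (f₁ : A₁ → B₁ → Z) (f₂ : A₂ → B₂ → Z) (α : A₁ →+ A₂) (β : B₂ →+ B₁)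
    (hcomm : ∀ a b, f₁ a (β b) = f₂ (α a) b)
    (hf₁_right_ker : ∀ b : B₁, (∀ a : A₁, f₁ a b = 0) → b = 0)
    {b : B₂} (hb : ∀ a, f₂ (α a) b = 0) : b ∈ β.ker :=
  hf₁_right_ker (β b) fun a => (hcomm a b).trans (hb a)

theorem stmt_2_general {Z A₁ B₁ A₂ B₂ : Type*}
    [AddCommGroup Z] [TopologicalSpace Z]
    [AddCommGroup A₁]
    [AddCommGroup A₂] [TopologicalSpace A₂]
    [AddCommGroup B₁] [AddCommGroup B₂]
    (f₁ : A₁ → B₁ → Z) (f₂ : A₂ → B₂ → Z)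
    (α : A₁ →+ A₂) (β : B₂ →+ B₁)
    (hcomm : ∀ a b, f₁ a (β b) = f₂ (α a) b)
    (hf₁_right_ker : ∀ b : B₁, (∀ a : A₁, f₁ a b = 0) → b = 0)
    (hf₂_right_surj : ∀ φ : A₂ → Z, (∀ a a', φ (a + a') = φ a + φ a') → Continuous φ →
      ∃ b : B₂, ∀ a, φ a = f₂ a b) :
    ∀ F : (A₂ ⧸ α.range) → β.ker → Z,
      (∀ (a : A₂) (b : β.ker), F (QuotientAddGroup.mk a) b = f₂ a b) →
      ∀ lam₀ : (A₂ ⧸ α.range) → Z,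
        (∀ x y, lam₀ (x + y) = lam₀ x + lam₀ y) → Continuous lam₀ →
        ∃ b : β.ker, ∀ x, lam₀ x = F x b := by
  intro F hF lam₀ hadd hcont
  let lam : A₂ ⧸ α.range →+ Z := AddMonoidHom.mk' lam₀ hadd
  obtain ⟨b, hb⟩ := hf₂_right_surj (lam ∘ QuotientAddGroup.mk) (fun a a' => hadd a a')
    (hcont.comp continuous_quot_mk)
  have hπα : ∀ a, (α a : A₂ ⧸ α.range) = 0 := fun a =>
    (QuotientAddGroup.eq_zero_iff (α a)).2 (AddMonoidHom.mem_range.2 ⟨a, rfl⟩)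
  have hb_ker : b ∈ β.ker := mem_ker_of_pairing_range_eq_zero f₁ f₂ α β hcomm hf₁_right_ker
    fun a => by rw [← hb, Function.comp_apply, hπα, map_zero]
  refine ⟨⟨b, hb_ker⟩, fun x => QuotientAddGroup.induction_on x fun a => ?_⟩
  rw [hF, ← hb]
  rfl

/-- For a commutative diagram of pairings valued in a finite abelian
group `Z`: if the quotient map `π : A₂ → Coker(α)` splits by a continuous homomorphism
`s`, the right kernel of the first pairing is trivial, and the second pairing is
right-surjective, then the induced Coker–Ker pairing `F` is right-surjective: every
continuous homomorphism `λ₀ : Coker(α) → Z` is of the form `λ₀ = F · b` for some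
`b ∈ Ker(β)`. -/
theorem stmt_2 {Z A₁ B₁ A₂ B₂ : Type*}
    [AddCommGroup Z] [Finite Z] [TopologicalSpace Z] [DiscreteTopology Z]
    [AddCommGroup A₁] [TopologicalSpace A₁] [IsTopologicalAddGroup A₁]
    [CompactSpace A₁] [T2Space A₁] [TotallyDisconnectedSpace A₁]
    [AddCommGroup A₂] [TopologicalSpace A₂] [IsTopologicalAddGroup A₂]
    [CompactSpace A₂] [T2Space A₂] [TotallyDisconnectedSpace A₂]
    [AddCommGroup B₁] [AddCommGroup B₂]
    (f₁ : A₁ → B₁ → Z) (f₂ : A₂ → B₂ → Z)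
    (hf₁add_left : ∀ a a' b, f₁ (a + a') b = f₁ a b + f₁ a' b)
    (hf₁add_right : ∀ a b b', f₁ a (b + b') = f₁ a b + f₁ a b')
    (hf₁cont : ∀ b, Continuous fun a => f₁ a b)
    (hf₂add_left : ∀ a a' b, f₂ (a + a') b = f₂ a b + f₂ a' b)
    (hf₂add_right : ∀ a b b', f₂ a (b + b') = f₂ a b + f₂ a b')
    (hf₂cont : ∀ b, Continuous fun a => f₂ a b)
    (α : A₁ →+ A₂) (hαcont : Continuous α) (β : B₂ →+ B₁)
    (hcomm : ∀ a b, f₁ a (β b) = f₂ (α a) b)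
    (s : (A₂ ⧸ α.range) →+ A₂) (hscont : Continuous s)
    (hsplit : ∀ x : A₂ ⧸ α.range, QuotientAddGroup.mk (s x) = x)
    (hf₁_right_ker : ∀ b : B₁, (∀ a : A₁, f₁ a b = 0) → b = 0)
    (hf₂_right_surj : ∀ φ : A₂ → Z, (∀ a a', φ (a + a') = φ a + φ a') → Continuous φ →
      ∃ b : B₂, ∀ a, φ a = f₂ a b) :
    ∀ F : (A₂ ⧸ α.range) → β.ker → Z,
      (∀ (a : A₂) (b : β.ker), F (QuotientAddGroup.mk a) b = f₂ a b) →
      ∀ lam₀ : (A₂ ⧸ α.range) → Z,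
        (∀ x y, lam₀ (x + y) = lam₀ x + lam₀ y) → Continuous lam₀ →
        ∃ b : β.ker, ∀ x, lam₀ x = F x b :=
  stmt_2_general f₁ f₂ α β hcomm hf₁_right_ker hf₂_right_surj
end

section
/- Let p be a prime, Z = Z/p, and let (A₁,B₁,(·,·)₁), (A₂,B₂,(·,·)₂), α, β form a commutative diagram of pairings valued in Z/p, where the groups A₁, A₂, B₁, B₂ all have exponent p. Assume that the right kernel of (·,·)₁ is trivial and that (·,·)₂ is perfect. Then the induced Coker–Ker pairing (·,·)_{CK} : Coker(α) × Ker(β) → Z/p is perfect, i.e. the induced maps Coker(α) → Hom(Ker(β), Z/p) and Ker(β) → Hom_cont(Coker(α), Z/p) are both bijective. -/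
/-! Since the pairing on `A₂ × B₂` is perfect, a continuous character of `A₂` that kills `α(A₁)`
is `(·, b)₂` for some `b ∈ B₂`, and then `(·, β b)₁ = 0`, so `b ∈ Ker β` as the right kernel of
`(·,·)₁` is trivial. This gives surjectivity onto `Hom_cont(Coker α, ℤ/p)`, and, because
continuous `ℤ/p`-characters of the profinite exponent-`p` group `A₂` separate points from the
closed subgroup `α(A₁)`, also injectivity of `Coker α → Hom(Ker β, ℤ/p)`. Surjectivity of the
latter holds because characters of the `𝔽_p`-vector space `Ker β` extend to `B₂`, and
injectivity of `Ker β → Hom_cont(Coker α, ℤ/p)` is inherited from the perfect pairing. -/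

theorem exists_addMonoidHom_zmod_ne_zero {p : ℕ} (hp : p.Prime) {Q : Type*} [AddCommGroup Q]
    (hexp : ∀ q : Q, p • q = 0) {q : Q} (hq : q ≠ 0) : ∃ ψ : Q →+ ZMod p, ψ q ≠ 0 := by
  have : Fact p.Prime := ⟨hp⟩
  have := AddCommGroup.zmodModule hexp
  by_contra! h
  exact hq ((Module.forall_dual_apply_eq_zero_iff (ZMod p) q).1 fun ψ => h ψ.toAddMonoidHom)

theorem exists_addMonoidHom_zmod_extend {p : ℕ} (hp : p.Prime) {B : Type*} [AddCommGroup B]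
    (hexp : ∀ b : B, p • b = 0) (H : AddSubgroup B) (χ : H →+ ZMod p) :
    ∃ g : B →+ ZMod p, ∀ h : H, g h = χ h := by
  have : Fact p.Prime := ⟨hp⟩
  have := AddCommGroup.zmodModule hexp
  let S : Submodule (ZMod p) B := AddSubgroup.toZModSubmodule p H
  let χ' : ↥S →+ ZMod p := χ
  obtain ⟨g, hg⟩ := LinearMap.exists_extend (χ'.toZModLinearMap p)
  exact ⟨g.toAddMonoidHom, fun h => LinearMap.congr_fun hg h⟩

section Profinite

variable {A : Type*} [AddCommGroup A] [TopologicalSpace A] [IsTopologicalAddGroup A]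
  [CompactSpace A] [T2Space A] [TotallyDisconnectedSpace A]

theorem exists_isOpen_addSubgroup_le_notMem {C : AddSubgroup A} (hC : IsClosed (C : Set A))
    {a : A} (ha : a ∉ C) : ∃ N : AddSubgroup A, C ≤ N ∧ IsOpen (N : Set A) ∧ a ∉ N := by
  have hcompl : IsOpen ((fun c => a - c) '' (C : Set A))ᶜ :=
    (hC.isCompact.image (by fun_prop)).isClosed.isOpen_compl
  have h0 : (0 : A) ∈ ((fun c => a - c) '' (C : Set A))ᶜ := by
    rintro ⟨c, hc, hac⟩
    exact ha (sub_eq_zero.1 hac ▸ hc)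
  obtain ⟨V, hV, hV0, hVsub⟩ := compact_exists_isClopen_in_isOpen hcompl h0
  obtain ⟨U, hUV⟩ := IsTopologicalAddGroup.exist_openAddSubgroup_sub_clopen_nhds_of_zero hV hV0
  refine ⟨U.toAddSubgroup ⊔ C, le_sup_right,
    AddSubgroup.isOpen_mono le_sup_left U.isOpen, fun haN => ?_⟩
  obtain ⟨u, hu, c, hc, rfl⟩ := AddSubgroup.mem_sup.1 haN
  exact hVsub (hUV hu) ⟨c, hc, add_sub_cancel_right u c⟩

theorem exists_continuous_addMonoidHom_zmod_separating {p : ℕ} (hp : p.Prime)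
    (hexp : ∀ a : A, p • a = 0) {C : AddSubgroup A} (hC : IsClosed (C : Set A)) {a : A}
    (ha : a ∉ C) : ∃ φ : A →+ ZMod p, Continuous φ ∧ C ≤ φ.ker ∧ φ a ≠ 0 := by
  obtain ⟨N, hCN, hN, haN⟩ := exists_isOpen_addSubgroup_le_notMem hC ha
  have : DiscreteTopology (A ⧸ N) := QuotientAddGroup.discreteTopology hN
  obtain ⟨ψ, hψ⟩ := exists_addMonoidHom_zmod_ne_zero hp
    (fun x : A ⧸ N => QuotientAddGroup.induction_on x fun y => by
      rw [← QuotientAddGroup.mk_nsmul, hexp, QuotientAddGroup.mk_zero])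
    (mt (QuotientAddGroup.eq_zero_iff a).1 haN)
  refine ⟨ψ.comp (QuotientAddGroup.mk' N),
    (continuous_of_discreteTopology (f := ψ)).comp continuous_quot_mk, fun c hc => ?_, hψ⟩
  simp [(QuotientAddGroup.eq_zero_iff c).2 (hCN hc)]

end Profinite

theorem eq_of_forall_pairing_eq {A B M : Type*} [AddGroup B] [AddGroup M] {f : A → B → M}
    (hadd : ∀ a b b', f a (b + b') = f a b + f a b') (hinj : ∀ b, (∀ a, f a b = 0) → b = 0)
    {b b' : B} (h : ∀ a, f a b = f a b') : b = b' :=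
  sub_eq_zero.1 <| hinj _ fun a => by
    change AddMonoidHom.mk' (f a) (hadd a) (b - b') = 0
    rw [map_sub, sub_eq_zero]
    exact h a

section Pairing

variable {p : ℕ} {A₁ A₂ B₁ B₂ : Type*} [AddCommGroup A₁] [AddCommGroup A₂] [AddCommGroup B₁]
  [AddCommGroup B₂] {f₁ : A₁ → B₁ → ZMod p} {f₂ : A₂ → B₂ → ZMod p} {α : A₁ →+ A₂} {β : B₂ →+ B₁}

theorem mem_ker_of_forall_range_pairing_eq_zero
    (hf₁_right_ker : ∀ b : B₁, (∀ a : A₁, f₁ a b = 0) → b = 0)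
    (hcomm : ∀ a b, f₁ a (β b) = f₂ (α a) b) {b : B₂} (hb : ∀ a, f₂ (α a) b = 0) :
    b ∈ β.ker :=
  hf₁_right_ker _ fun a => (hcomm a b).trans (hb a)

theorem mem_range_of_forall_ker_pairing_eq_zero (hp : p.Prime) [TopologicalSpace A₁]
    [CompactSpace A₁] [TopologicalSpace A₂] [IsTopologicalAddGroup A₂] [CompactSpace A₂]
    [T2Space A₂] [TotallyDisconnectedSpace A₂] (hA₂exp : ∀ a : A₂, p • a = 0)
    (hαcont : Continuous α) (hcomm : ∀ a b, f₁ a (β b) = f₂ (α a) b)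
    (hf₁_right_ker : ∀ b : B₁, (∀ a : A₁, f₁ a b = 0) → b = 0)
    (hf₂_right_surj : ∀ φ : A₂ → ZMod p, (∀ a a', φ (a + a') = φ a + φ a') → Continuous φ →
      ∃ b : B₂, ∀ a, φ a = f₂ a b)
    {a : A₂} (ha : ∀ b ∈ β.ker, f₂ a b = 0) : a ∈ α.range := by
  by_contra haα
  have hclosed : IsClosed (α.range : Set A₂) := by
    simpa only [AddMonoidHom.coe_range] using (isCompact_range hαcont).isClosed
  obtain ⟨φ, hφcont, hαφ, hφa⟩ :=
    exists_continuous_addMonoidHom_zmod_separating hp hA₂exp hclosed haα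
  obtain ⟨b, hb⟩ := hf₂_right_surj φ (map_add φ) hφcont
  have hbβ : b ∈ β.ker := mem_ker_of_forall_range_pairing_eq_zero hf₁_right_ker hcomm
    fun a₁ => (hb _).symm.trans (hαφ ⟨a₁, rfl⟩)
  exact hφa ((hb a).trans (ha b hbβ))

end Pairing

theorem stmt_3_general (p : ℕ) (hp : p.Prime)
    {A₁ B₁ A₂ B₂ : Type*}
    [AddCommGroup A₁] [TopologicalSpace A₁]
    [CompactSpace A₁]
    [AddCommGroup A₂] [TopologicalSpace A₂] [IsTopologicalAddGroup A₂]
    [CompactSpace A₂] [T2Space A₂] [TotallyDisconnectedSpace A₂]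
    [AddCommGroup B₁] [AddCommGroup B₂]
    (hA₂exp : ∀ a : A₂, p • a = 0)
    (hB₂exp : ∀ b : B₂, p • b = 0)
    (f₁ : A₁ → B₁ → ZMod p) (f₂ : A₂ → B₂ → ZMod p)
    (hf₂add_left : ∀ a a' b, f₂ (a + a') b = f₂ a b + f₂ a' b)
    (hf₂add_right : ∀ a b b', f₂ a (b + b') = f₂ a b + f₂ a b')
    (α : A₁ →+ A₂) (hαcont : Continuous α) (β : B₂ →+ B₁)
    (hcomm : ∀ a b, f₁ a (β b) = f₂ (α a) b)
    (hf₁_right_ker : ∀ b : B₁, (∀ a : A₁, f₁ a b = 0) → b = 0)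
    (hf₂_left_surj : ∀ χ : B₂ → ZMod p, (∀ b b', χ (b + b') = χ b + χ b') →
      ∃ a : A₂, ∀ b, χ b = f₂ a b)
    (hf₂_right_inj : ∀ b : B₂, (∀ a, f₂ a b = 0) → b = 0)
    (hf₂_right_surj : ∀ φ : A₂ → ZMod p, (∀ a a', φ (a + a') = φ a + φ a') → Continuous φ →
      ∃ b : B₂, ∀ a, φ a = f₂ a b) :
    ∀ F : (A₂ ⧸ α.range) → β.ker → ZMod p,
      (∀ (a : A₂) (b : β.ker), F (QuotientAddGroup.mk a) b = f₂ a b) →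
      -- the induced map `Coker(α) → Hom(Ker(β), ZMod p)` is bijective:
      ((∀ x y : A₂ ⧸ α.range, (∀ b, F x b = F y b) → x = y) ∧
       (∀ χ : β.ker → ZMod p, (∀ b b', χ (b + b') = χ b + χ b') →
         ∃ x : A₂ ⧸ α.range, ∀ b, χ b = F x b) ∧
      -- the induced map `Ker(β) → Hom_cont(Coker(α), ZMod p)` is bijective:
       (∀ b b' : β.ker, (∀ x, F x b = F x b') → b = b') ∧
       (∀ φ : (A₂ ⧸ α.range) → ZMod p, (∀ x y, φ (x + y) = φ x + φ y) → Continuous φ →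
         ∃ b : β.ker, ∀ x, φ x = F x b)) := by
  intro F hF
  refine ⟨?_, ?_, ?_, ?_⟩
  · intro x y h
    obtain ⟨a, rfl⟩ := QuotientAddGroup.mk_surjective x
    obtain ⟨a', rfl⟩ := QuotientAddGroup.mk_surjective y
    refine QuotientAddGroup.eq.2 <| mem_range_of_forall_ker_pairing_eq_zero hp hA₂exp hαcont hcomm
      hf₁_right_ker hf₂_right_surj fun b hb => ?_
    have hab := h ⟨b, hb⟩
    simp only [hF] at hab
    change AddMonoidHom.mk' (f₂ · b) (hf₂add_left · · b) (-a + a') = 0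
    rw [map_add, map_neg, neg_add_eq_zero]
    exact hab
  · intro χ hχ
    obtain ⟨g, hg⟩ := exists_addMonoidHom_zmod_extend hp hB₂exp β.ker (.mk' χ hχ)
    obtain ⟨a, ha⟩ := hf₂_left_surj g (map_add g)
    exact ⟨QuotientAddGroup.mk a, fun b => by rw [hF, ← ha, hg]; rfl⟩
  · exact fun b b' h => Subtype.ext <| eq_of_forall_pairing_eq hf₂add_right hf₂_right_inj
      fun a => by simpa only [hF] using h (QuotientAddGroup.mk a)
  · intro φ hφadd hφcont
    obtain ⟨b, hb⟩ := hf₂_right_surj (φ ∘ QuotientAddGroup.mk) (fun a a' => hφadd a a')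
      (hφcont.comp continuous_quot_mk)
    refine ⟨⟨b, mem_ker_of_forall_range_pairing_eq_zero hf₁_right_ker hcomm fun a₁ => ?_⟩, ?_⟩
    · rw [← hb, Function.comp_apply,
        (QuotientAddGroup.eq_zero_iff _).2 (AddMonoidHom.mem_range.2 ⟨a₁, rfl⟩)]
      exact (AddMonoidHom.mk' φ hφadd).map_zero
    · intro x
      obtain ⟨a, rfl⟩ := QuotientAddGroup.mk_surjective x
      rw [hF]
      exact hb a

/-- For a commutative diagram of pairings valued in `ZMod p` (`p` prime)
between groups of exponent `p`: if the right kernel of the first pairing is trivial and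
the second pairing is perfect, then the induced Coker–Ker pairing `F` is perfect, i.e.
the induced maps `Coker(α) → Hom(Ker(β), ZMod p)` and
`Ker(β) → Hom_cont(Coker(α), ZMod p)` are both bijective. -/
theorem stmt_3 (p : ℕ) (hp : p.Prime)
    {A₁ B₁ A₂ B₂ : Type*}
    [AddCommGroup A₁] [TopologicalSpace A₁] [IsTopologicalAddGroup A₁]
    [CompactSpace A₁] [T2Space A₁] [TotallyDisconnectedSpace A₁]
    [AddCommGroup A₂] [TopologicalSpace A₂] [IsTopologicalAddGroup A₂]
    [CompactSpace A₂] [T2Space A₂] [TotallyDisconnectedSpace A₂]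
    [AddCommGroup B₁] [AddCommGroup B₂]
    (hA₁exp : ∀ a : A₁, p • a = 0) (hA₂exp : ∀ a : A₂, p • a = 0)
    (hB₁exp : ∀ b : B₁, p • b = 0) (hB₂exp : ∀ b : B₂, p • b = 0)
    (f₁ : A₁ → B₁ → ZMod p) (f₂ : A₂ → B₂ → ZMod p)
    (hf₁add_left : ∀ a a' b, f₁ (a + a') b = f₁ a b + f₁ a' b)
    (hf₁add_right : ∀ a b b', f₁ a (b + b') = f₁ a b + f₁ a b')
    (hf₁cont : ∀ b, Continuous fun a => f₁ a b)
    (hf₂add_left : ∀ a a' b, f₂ (a + a') b = f₂ a b + f₂ a' b)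
    (hf₂add_right : ∀ a b b', f₂ a (b + b') = f₂ a b + f₂ a b')
    (hf₂cont : ∀ b, Continuous fun a => f₂ a b)
    (α : A₁ →+ A₂) (hαcont : Continuous α) (β : B₂ →+ B₁)
    (hcomm : ∀ a b, f₁ a (β b) = f₂ (α a) b)
    (hf₁_right_ker : ∀ b : B₁, (∀ a : A₁, f₁ a b = 0) → b = 0)
    (hf₂_left_inj : ∀ a : A₂, (∀ b, f₂ a b = 0) → a = 0)
    (hf₂_left_surj : ∀ χ : B₂ → ZMod p, (∀ b b', χ (b + b') = χ b + χ b') →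
      ∃ a : A₂, ∀ b, χ b = f₂ a b)
    (hf₂_right_inj : ∀ b : B₂, (∀ a, f₂ a b = 0) → b = 0)
    (hf₂_right_surj : ∀ φ : A₂ → ZMod p, (∀ a a', φ (a + a') = φ a + φ a') → Continuous φ →
      ∃ b : B₂, ∀ a, φ a = f₂ a b) :
    ∀ F : (A₂ ⧸ α.range) → β.ker → ZMod p,
      (∀ (a : A₂) (b : β.ker), F (QuotientAddGroup.mk a) b = f₂ a b) →
      -- the induced map `Coker(α) → Hom(Ker(β), ZMod p)` is bijective:
      ((∀ x y : A₂ ⧸ α.range, (∀ b, F x b = F y b) → x = y) ∧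
       (∀ χ : β.ker → ZMod p, (∀ b b', χ (b + b') = χ b + χ b') →
         ∃ x : A₂ ⧸ α.range, ∀ b, χ b = F x b) ∧
      -- the induced map `Ker(β) → Hom_cont(Coker(α), ZMod p)` is bijective:
       (∀ b b' : β.ker, (∀ x, F x b = F x b') → b = b') ∧
       (∀ φ : (A₂ ⧸ α.range) → ZMod p, (∀ x y, φ (x + y) = φ x + φ y) → Continuous φ →
         ∃ b : β.ker, ∀ x, φ x = F x b)) :=
  stmt_3_general p hp hA₂exp hB₂exp f₁ f₂ hf₂add_left hf₂add_right α hαcont β hcomm hf₁_right_ker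
    hf₂_left_surj hf₂_right_inj hf₂_right_surj
end

section
/- Let G be a profinite group, N a closed normal subgroup of G, and m ≥ 2 an integer. Let D be the topological closure in G of the subgroup generated by {nᵐ : n ∈ N} ∪ {[g,n] : g ∈ G, n ∈ N}; then D is a closed normal subgroup of G contained in N. Let H be the abelian group of continuous homomorphisms φ: N → Z/m satisfying φ(g n g⁻¹) = φ(n) for all g ∈ G, n ∈ N. Then the substitution pairing N/D × H → Z/m, (nD, φ) ↦ φ(n), is well defined and perfect: the induced maps N/D → Hom(H, Z/m) and H → Hom_cont(N/D, Z/m) are both bijective. -/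
/-!
Every `φ ∈ H` kills the `m`-th powers and the commutators `[g, n]`, hence, by continuity, all of
`D`; this makes the pairing well defined. If `n ∉ D`, then `n` already survives in a finite
quotient `N/V` by an open subgroup `V ⊇ D`; this quotient is abelian of exponent dividing `m`, so by
the structure theorem it has a `ℤ/m`-character not killing `n`, and any character of `N` killing
`D` is `G`-invariant. For a homomorphism `χ : H → ℤ/m` and finitely many `φ₁, …, φₖ ∈ H`, the image
of `N` in `(ℤ/m)ᵏ` is a subgroup; a vector `a` orthogonal to it gives `∑ aᵢ φᵢ = 0`, so `a` is also
orthogonal to `(χ φᵢ)ᵢ`, and duality over `ℤ/m` puts `(χ φᵢ)ᵢ` in the image. Compactness of `N`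
then realises `χ` on all of `H` at once.
-/

theorem apply_inv_mul_eq_sub {K A : Type*} [Group K] [AddCommGroup A] {φ : K → A}
    (hφ : ∀ a b, φ (a * b) = φ a + φ b) (a b : K) : φ (a⁻¹ * b) = φ b - φ a := by
  rw [eq_sub_iff_add_eq', ← hφ, mul_inv_cancel_left]

theorem ZMod.exists_addMonoidHom_injective_of_dvd {q m : ℕ} [NeZero m] (h : q ∣ m) :
    ∃ f : ZMod q →+ ZMod m, Function.Injective f := by
  obtain ⟨k, rfl⟩ := h
  have hk : (k : ℤ) ≠ 0 := mod_cast right_ne_zero_of_mul (NeZero.ne (q * k))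
  refine ⟨ZMod.lift q ⟨k • Int.castAddHom (ZMod (q * k)), by simp [← Nat.cast_mul, mul_comm]⟩, ?_⟩
  refine (injective_iff_map_eq_zero _).mpr fun a ha => ?_
  obtain ⟨z, rfl⟩ := ZMod.intCast_surjective a
  have : ((z * k : ℤ) : ZMod (q * k)) = 0 := by simpa [mul_comm] using ha
  rw [ZMod.intCast_zmod_eq_zero_iff_dvd, Nat.cast_mul] at this
  rw [ZMod.intCast_zmod_eq_zero_iff_dvd]
  exact Int.dvd_of_mul_dvd_mul_right hk this

theorem AddCommGroup.exists_addMonoidHom_zmod_apply_ne_zero {A : Type*} [AddCommGroup A]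
    [Finite A] {m : ℕ} [NeZero m] (hA : ∀ a : A, m • a = 0) {a : A} (ha : a ≠ 0) :
    ∃ f : A →+ ZMod m, f a ≠ 0 := by
  classical
  obtain ⟨ι, _, n, -, ⟨e⟩⟩ := AddCommGroup.equiv_directSum_zmod_of_finite' A
  obtain ⟨i, hi⟩ : ∃ i, e a i ≠ 0 := by
    by_contra! h
    exact ha (e.map_eq_zero_iff.mp (DFinsupp.ext h))
  let component : A →+ ZMod (n i) := (DFinsupp.evalAddMonoidHom i).comp e.toAddMonoidHom
  have hdvd : n i ∣ m := by
    have := congrArg (fun v => e v i) (hA (e.symm (DirectSum.of _ i 1)))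
    simp only [map_nsmul, AddEquiv.apply_symm_apply, map_zero, DirectSum.smul_apply] at this
    simpa [ZMod.natCast_eq_zero_iff] using this
  obtain ⟨g, hg⟩ := ZMod.exists_addMonoidHom_injective_of_dvd hdvd
  exact ⟨g.comp component, fun h => hi (hg (h.trans g.map_zero.symm))⟩

theorem AddSubgroup.mem_of_forall_dotProduct_eq_zero {ι : Type*} [Fintype ι] {m : ℕ} [NeZero m]
    {A : AddSubgroup (ι → ZMod m)} {c : ι → ZMod m}
    (h : ∀ a : ι → ZMod m, (∀ v ∈ A, a ⬝ᵥ v = 0) → a ⬝ᵥ c = 0) : c ∈ A := by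
  classical
  by_contra hc
  have htors : ∀ v : (ι → ZMod m) ⧸ A, m • v = 0 := by
    intro v
    induction v using QuotientAddGroup.induction_on with | H v => ?_
    rw [← QuotientAddGroup.mk_nsmul, show m • v = 0 by ext; simp, QuotientAddGroup.mk_zero]
  obtain ⟨f, hf⟩ := AddCommGroup.exists_addMonoidHom_zmod_apply_ne_zero htors
    (mt (QuotientAddGroup.eq_zero_iff c).mp hc)
  let T := (f.comp (QuotientAddGroup.mk' A)).toZModLinearMap m
  let a : ι → ZMod m := fun i => T fun j => if i = j then 1 else 0
  have hT : ∀ v, T v = a ⬝ᵥ v := fun v => by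
    rw [LinearMap.pi_apply_eq_sum_univ T v, dotProduct_comm]
    rfl
  refine hf ?_
  change T c = 0
  rw [hT]
  refine h a fun v hv => ?_
  rw [← hT]
  change f v = 0
  rw [(QuotientAddGroup.eq_zero_iff v).mpr hv, map_zero]

theorem exists_forall_apply_eq_of_forall_dotProduct {K ι : Type*} [Group K] [Fintype ι] {m : ℕ}
    [NeZero m] (φ : ι → K → ZMod m) (hφ : ∀ i a b, φ i (a * b) = φ i a + φ i b)
    {c : ι → ZMod m} (hc : ∀ a : ι → ZMod m, (∀ n, a ⬝ᵥ (fun i => φ i n) = 0) → a ⬝ᵥ c = 0) :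
    ∃ n, ∀ i, φ i n = c i := by
  let ev : Additive K →+ (ι → ZMod m) :=
    AddMonoidHom.mk' (fun n i => φ i n.toMul) fun a b => funext fun i => hφ i a.toMul b.toMul
  obtain ⟨n, hn⟩ : c ∈ ev.range :=
    AddSubgroup.mem_of_forall_dotProduct_eq_zero fun a ha => hc a fun n => ha _ ⟨.ofMul n, rfl⟩
  exact ⟨n.toMul, congrFun hn⟩

theorem exists_forall_apply_eq_of_compactSpace {K : Type*} [Group K] [TopologicalSpace K]
    [CompactSpace K] {m : ℕ} [NeZero m] {H : Submodule (ZMod m) (K → ZMod m)}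
    (hH : ∀ φ ∈ H, Continuous φ ∧ ∀ a b, φ (a * b) = φ a + φ b) (χ : H →ₗ[ZMod m] ZMod m) :
    ∃ n : K, ∀ φ : H, (φ : K → ZMod m) n = χ φ := by
  obtain ⟨n, hn⟩ := CompactSpace.iInter_nonempty
    (t := fun φ : H => {n | (φ : K → ZMod m) n = χ φ})
    (fun φ => isClosed_eq (hH φ φ.2).1 continuous_const) fun s => by
      obtain ⟨n, hn⟩ := exists_forall_apply_eq_of_forall_dotProduct
        (fun φ : s => (φ : K → ZMod m)) (fun φ => (hH φ φ.1.2).2) (c := fun φ => χ φ) fun a ha => by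
          have hsum : ∑ φ : s, a φ • (φ : H) = 0 := Subtype.ext <| funext fun n => by
            simpa [dotProduct] using ha n
          simpa [dotProduct] using congrArg χ hsum
      exact ⟨n, Set.mem_iInter₂.mpr fun φ hφ => hn ⟨φ, hφ⟩⟩
  exact ⟨n, Set.mem_iInter.mp hn⟩

section Profinite

variable {K : Type*} [Group K] [TopologicalSpace K] [IsTopologicalGroup K] [CompactSpace K]

theorem exists_isOpen_subgroup_le_notMem [TotallyDisconnectedSpace K] {L : Subgroup K}
    (hL : IsClosed (L : Set K)) {x : K} (hx : x ∉ L) :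
    ∃ V : Subgroup K, IsOpen (V : Set K) ∧ L ≤ V ∧ x ∉ V := by
  rw [show L = ((⟨L, hL⟩ : ClosedSubgroup K) : Subgroup K) from rfl,
    ProfiniteGrp.closedSubgroup_eq_sInf_open] at hx
  simp only [Subgroup.mem_sInf, not_forall] at hx
  obtain ⟨V, ⟨hVopen, hLV⟩, hxV⟩ := hx
  exact ⟨V, hVopen, hLV, hxV⟩

open scoped IsMulCommutative in
theorem exists_continuous_zmod_hom_of_isOpen {m : ℕ} [NeZero m] {V : Subgroup K}
    (hV : IsOpen (V : Set K)) (hcomm : commutator K ≤ V) (hpow : ∀ a : K, a ^ m ∈ V)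
    {x : K} (hx : x ∉ V) :
    ∃ φ : K → ZMod m, (∀ a b, φ (a * b) = φ a + φ b) ∧ Continuous φ ∧ (∀ a ∈ V, φ a = 0) ∧
      φ x ≠ 0 := by
  have : V.Normal := .of_commutator_le K hcomm
  have : IsMulCommutative (K ⧸ V) :=
    Subgroup.Normal.quotient_commutative_iff_commutator_le.mpr hcomm
  have : Finite (K ⧸ V) := Subgroup.quotient_finite_of_isOpen V hV
  have : DiscreteTopology (K ⧸ V) := QuotientGroup.discreteTopology hV
  have htors (q : K ⧸ V) : m • Additive.ofMul q = 0 := by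
    induction q using QuotientGroup.induction_on with | H a => ?_
    rw [← ofMul_pow, ← QuotientGroup.mk_pow, (QuotientGroup.eq_one_iff _).mpr (hpow a), ofMul_one]
  obtain ⟨f, hf⟩ := AddCommGroup.exists_addMonoidHom_zmod_apply_ne_zero
    (A := Additive (K ⧸ V)) (fun q => htors q.toMul) (a := .ofMul (x : K ⧸ V))
    (by simpa [QuotientGroup.eq_one_iff] using hx)
  refine ⟨fun a => f (.ofMul (a : K ⧸ V)),
    fun a b => map_add f (.ofMul (a : K ⧸ V)) (.ofMul (b : K ⧸ V)),
    continuous_of_discreteTopology.comp continuous_quotient_mk', fun a ha => ?_, hf⟩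
  simp [(QuotientGroup.eq_one_iff a).mpr ha]

theorem exists_continuous_zmod_hom_of_isClosed [TotallyDisconnectedSpace K] {m : ℕ} [NeZero m]
    {L : Subgroup K} (hL : IsClosed (L : Set K)) (hcomm : commutator K ≤ L)
    (hpow : ∀ a : K, a ^ m ∈ L) {x : K} (hx : x ∉ L) :
    ∃ φ : K → ZMod m, (∀ a b, φ (a * b) = φ a + φ b) ∧ Continuous φ ∧ (∀ a ∈ L, φ a = 0) ∧
      φ x ≠ 0 := by
  obtain ⟨V, hVopen, hLV, hxV⟩ := exists_isOpen_subgroup_le_notMem hL hx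
  obtain ⟨φ, hφ, hφc, hφV, hφx⟩ := exists_continuous_zmod_hom_of_isOpen hVopen (hcomm.trans hLV)
    (fun a => hLV (hpow a)) hxV
  exact ⟨φ, hφ, hφc, fun a ha => hφV a (hLV ha), hφx⟩

end Profinite

section PowCommutator

variable {G : Type*} [Group G] (N : Subgroup G) (m : ℕ)

def powCommutatorSet : Set G :=
  {x : G | ∃ n ∈ N, x = n ^ m} ∪ {x : G | ∃ g : G, ∃ n ∈ N, x = g * n * g⁻¹ * n⁻¹}

variable [N.Normal]

theorem powCommutatorSet_subset : powCommutatorSet N m ⊆ N := by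
  rintro _ (⟨n, hn, rfl⟩ | ⟨g, n, hn, rfl⟩)
  · exact N.pow_mem hn m
  · exact N.mul_mem (‹N.Normal›.conj_mem n hn g) (N.inv_mem hn)

theorem conjugatesOfSet_powCommutatorSet_subset :
    Group.conjugatesOfSet (powCommutatorSet N m) ⊆ powCommutatorSet N m := by
  intro y hy
  obtain ⟨x, hx, hxy⟩ := Group.mem_conjugatesOfSet_iff.mp hy
  obtain ⟨c, rfl⟩ := isConj_iff.mp hxy
  have hconj {n : G} (hn : n ∈ N) : c * n * c⁻¹ ∈ N := ‹N.Normal›.conj_mem n hn c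
  rcases hx with ⟨n, hn, rfl⟩ | ⟨g, n, hn, rfl⟩
  · exact .inl ⟨c * n * c⁻¹, hconj hn, conj_pow.symm⟩
  · exact .inr ⟨c * g * c⁻¹, c * n * c⁻¹, hconj hn, by group⟩

instance closure_powCommutatorSet_normal : (Subgroup.closure (powCommutatorSet N m)).Normal := by
  rw [le_antisymm Subgroup.closure_le_normalClosure
    (Subgroup.closure_mono (conjugatesOfSet_powCommutatorSet_subset N m))]
  infer_instance

end PowCommutator

section Topological

variable {G : Type*} [Group G] [TopologicalSpace G] [IsTopologicalGroup G] (N : Subgroup G)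
  (m : ℕ)

def powCommutatorClosure : Subgroup G :=
  (Subgroup.closure (powCommutatorSet N m)).topologicalClosure

theorem isClosed_powCommutatorClosure : IsClosed (powCommutatorClosure N m : Set G) :=
  Subgroup.isClosed_topologicalClosure _

theorem powCommutatorClosure_le_of_subset {K : Subgroup G} (hK : IsClosed (K : Set G))
    (h : powCommutatorSet N m ⊆ K) : powCommutatorClosure N m ≤ K :=
  Subgroup.topologicalClosure_minimal _ (Subgroup.closure_le K |>.mpr h) hK

theorem powCommutatorSet_subset_powCommutatorClosure :
    powCommutatorSet N m ⊆ powCommutatorClosure N m :=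
  Subgroup.subset_closure.trans (Subgroup.le_topologicalClosure _)

variable [N.Normal]

instance powCommutatorClosure_normal : (powCommutatorClosure N m).Normal :=
  Subgroup.is_normal_topologicalClosure _

theorem powCommutatorClosure_le (hN : IsClosed (N : Set G)) : powCommutatorClosure N m ≤ N :=
  powCommutatorClosure_le_of_subset N m hN (powCommutatorSet_subset N m)

end Topological

section InvariantHoms

variable {G : Type*} [Group G] [TopologicalSpace G] (N : Subgroup G) (m : ℕ)

def invariantHoms : Submodule (ZMod m) (N → ZMod m) where
  carrier := {φ | (∀ a b : N, φ (a * b) = φ a + φ b) ∧ Continuous φ ∧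
    ∀ (g : G) (a b : N), (b : G) = g * (a : G) * g⁻¹ → φ b = φ a}
  add_mem' := fun ⟨hφ, hφc, hφg⟩ ⟨hψ, hψc, hψg⟩ =>
    ⟨fun a b => by simp only [Pi.add_apply, hφ, hψ]; ring, hφc.add hψc,
      fun g a b h => by simp only [Pi.add_apply, hφg g a b h, hψg g a b h]⟩
  zero_mem' := ⟨fun _ _ => (add_zero 0).symm, continuous_const, fun _ _ _ _ => rfl⟩
  smul_mem' c := fun ⟨hφ, hφc, hφg⟩ =>
    ⟨fun a b => by simp only [Pi.smul_apply, smul_eq_mul, hφ, mul_add], hφc.const_smul c,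
      fun g a b h => by simp only [Pi.smul_apply, hφg g a b h]⟩

end InvariantHoms

section Pairing

variable {G : Type*} [Group G] [TopologicalSpace G] [IsTopologicalGroup G] (N : Subgroup G)
  (m : ℕ)

theorem apply_eq_zero_of_mem_invariantHoms [N.Normal] (hN : IsClosed (N : Set G))
    {φ : N → ZMod m} (hφ : φ ∈ invariantHoms N m) {a : N}
    (ha : (a : G) ∈ powCommutatorClosure N m) : φ a = 0 := by
  let f : N →* Multiplicative (ZMod m) := MonoidHom.mk' (fun a => .ofAdd (φ a)) hφ.1
  have hf (a : N) : a ∈ f.ker ↔ φ a = 0 := f.mem_ker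
  have hker : IsClosed (f.ker.map N.subtype : Set G) := by
    rw [Subgroup.coe_map, show (f.ker : Set N) = {a | φ a = 0} from Set.ext hf]
    exact hN.isClosedEmbedding_subtypeVal.isClosedMap _ (isClosed_eq hφ.2.1 continuous_const)
  have hsub : powCommutatorSet N m ⊆ f.ker.map N.subtype := by
    rintro _ (⟨n, hn, rfl⟩ | ⟨g, n, hn, rfl⟩)
    · refine ⟨⟨n, hn⟩ ^ m, f.mem_ker.mpr ?_, rfl⟩
      rw [map_pow]
      change Multiplicative.ofAdd (φ _) ^ m = 1
      rw [← ofAdd_nsmul, nsmul_eq_mul, ZMod.natCast_self, zero_mul, ofAdd_zero]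
    · have hconj : g * n * g⁻¹ ∈ N := ‹N.Normal›.conj_mem n hn g
      refine ⟨⟨g * n * g⁻¹, hconj⟩ * (⟨n, hn⟩ : N)⁻¹, f.mem_ker.mpr ?_, rfl⟩
      rw [map_mul_inv, mul_inv_eq_one]
      exact congrArg Multiplicative.ofAdd (hφ.2.2 g ⟨n, hn⟩ _ rfl)
  obtain ⟨b, hb, hba⟩ := powCommutatorClosure_le_of_subset N m hker hsub ha
  rwa [← hf, ← Subtype.ext hba]

theorem mem_invariantHoms_of_forall_eq_zero {φ : N → ZMod m}
    (hφ : ∀ a b, φ (a * b) = φ a + φ b) (hφc : Continuous φ)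
    (h : ∀ a : N, (a : G) ∈ powCommutatorClosure N m → φ a = 0) : φ ∈ invariantHoms N m := by
  refine ⟨hφ, hφc, fun g a b hab => ?_⟩
  rw [eq_comm, ← sub_eq_zero, ← apply_inv_mul_eq_sub hφ]
  refine h _ (powCommutatorSet_subset_powCommutatorClosure N m (.inr ⟨g, _, N.inv_mem a.2, ?_⟩))
  simp [hab, mul_assoc]

end Pairing

theorem exists_mem_invariantHoms_apply_ne_zero {G : Type*} [Group G] [TopologicalSpace G]
    [IsTopologicalGroup G] [CompactSpace G] [TotallyDisconnectedSpace G] {N : Subgroup G}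
    (hN : IsClosed (N : Set G)) {m : ℕ} [NeZero m] {a : N}
    (ha : (a : G) ∉ powCommutatorClosure N m) : ∃ φ ∈ invariantHoms N m, φ a ≠ 0 := by
  have : CompactSpace N := isCompact_iff_compactSpace.mp hN.isCompact
  have hmem {x : N} (hx : (x : G) ∈ powCommutatorSet N m) :
      x ∈ (powCommutatorClosure N m).subgroupOf N :=
    powCommutatorSet_subset_powCommutatorClosure N m hx
  have hcomm : commutator N ≤ (powCommutatorClosure N m).subgroupOf N := by
    rw [commutator_def, Subgroup.commutator_le]
    exact fun x _ y _ => hmem (.inr ⟨x, y, y.2, rfl⟩)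
  obtain ⟨φ, hφ, hφc, hφD, hφa⟩ := exists_continuous_zmod_hom_of_isClosed
    ((isClosed_powCommutatorClosure N m).preimage continuous_subtype_val) hcomm
    (fun x => hmem (.inl ⟨x, x.2, rfl⟩)) ha
  exact ⟨φ, mem_invariantHoms_of_forall_eq_zero N m hφ hφc hφD, hφa⟩

theorem stmt_9_general {G : Type*} [Group G] [TopologicalSpace G] [IsTopologicalGroup G]
    [CompactSpace G] [TotallyDisconnectedSpace G]
    (N : Subgroup G) [N.Normal] (hNclosed : IsClosed (N : Set G))
    (m : ℕ) (hm : 2 ≤ m)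
    (D : Subgroup G)
    (hD : D = (Subgroup.closure ({x : G | ∃ n ∈ N, x = n ^ m} ∪
        {x : G | ∃ g : G, ∃ n ∈ N, x = g * n * g⁻¹ * n⁻¹})).topologicalClosure)
    (Hset : Set (↥N → ZMod m))
    (hHset : Hset = {φ | (∀ a b : ↥N, φ (a * b) = φ a + φ b) ∧ Continuous φ ∧
        ∀ (g : G) (a b : ↥N), (b : G) = g * (a : G) * g⁻¹ → φ b = φ a}) :
    IsClosed (D : Set G) ∧ D.Normal ∧ D ≤ N ∧
    ∃ F : (↥N ⧸ D.subgroupOf N) → ↥Hset → ZMod m,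
      -- the pairing `(nD, φ) ↦ φ(n)` is well defined:
      (∀ (x : ↥N) (φ : ↥Hset), F (QuotientGroup.mk x) φ = φ.1 x) ∧
      -- the induced map `N/D → Hom(H, ZMod m)` is bijective:
      (∀ x y : ↥N ⧸ D.subgroupOf N, (∀ φ : ↥Hset, F x φ = F y φ) → x = y) ∧
      (∀ χ : ↥Hset → ZMod m,
        (∀ (φ ψ : ↥Hset) (h : φ.1 + ψ.1 ∈ Hset), χ ⟨φ.1 + ψ.1, h⟩ = χ φ + χ ψ) →
        ∃ x : ↥N ⧸ D.subgroupOf N, ∀ φ, χ φ = F x φ) ∧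
      -- the induced map `H → Hom_cont(N/D, ZMod m)` is bijective:
      (∀ φ ψ : ↥Hset, (∀ x, F x φ = F x ψ) → φ = ψ) ∧
      (∀ ξ : (↥N ⧸ D.subgroupOf N) → ZMod m,
        (∀ a b : ↥N, ξ (QuotientGroup.mk (a * b)) =
          ξ (QuotientGroup.mk a) + ξ (QuotientGroup.mk b)) →
        Continuous ξ → ∃ φ : ↥Hset, ∀ x, ξ x = F x φ) := by
  obtain rfl : D = powCommutatorClosure N m := hD
  obtain rfl : Hset = invariantHoms N m := hHset
  have : NeZero m := ⟨by omega⟩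
  have : CompactSpace N := isCompact_iff_compactSpace.mp hNclosed.isCompact
  refine ⟨isClosed_powCommutatorClosure N m, inferInstance, powCommutatorClosure_le N m hNclosed,
    fun x φ => Quotient.liftOn' x φ.1 fun a b hab => ?_, fun _ _ => rfl, ?_, ?_, ?_, ?_⟩
  · rw [eq_comm, ← sub_eq_zero, ← apply_inv_mul_eq_sub φ.2.1]
    exact apply_eq_zero_of_mem_invariantHoms N m hNclosed φ.2
      (Subgroup.mem_subgroupOf.mp (QuotientGroup.leftRel_apply.mp hab))
  · intro x y hxy
    induction x using QuotientGroup.induction_on with | H a => ?_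
    induction y using QuotientGroup.induction_on with | H b => ?_
    refine QuotientGroup.eq.mpr (not_not.mp fun hab => ?_)
    obtain ⟨φ, hφ, hφab⟩ := exists_mem_invariantHoms_apply_ne_zero hNclosed
      (mt Subgroup.mem_subgroupOf.mpr hab)
    rw [apply_inv_mul_eq_sub (φ := φ) hφ.1, sub_ne_zero] at hφab
    exact hφab (hxy ⟨φ, hφ⟩).symm
  · intro χ hχ
    obtain ⟨a, ha⟩ := exists_forall_apply_eq_of_compactSpace (H := invariantHoms N m)
      (fun φ hφ => ⟨hφ.2.1, hφ.1⟩) ((AddMonoidHom.mk' χ fun φ ψ => hχ φ ψ _).toZModLinearMap m)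
    exact ⟨a, fun φ => (ha φ).symm⟩
  · exact fun φ ψ h => Subtype.ext (funext fun a => h a)
  · intro ξ hξ hξc
    refine ⟨⟨fun a => ξ a, mem_invariantHoms_of_forall_eq_zero N m hξ
      (hξc.comp continuous_quotient_mk') fun a ha => ?_⟩, fun x => ?_⟩
    · have h1 : ξ 1 = 0 := by simpa using hξ 1 1
      rwa [← (QuotientGroup.eq_one_iff a).mpr (Subgroup.mem_subgroupOf.mpr ha)] at h1
    · induction x using QuotientGroup.induction_on with | H a => rfl

/-- Let `G` be profinite, `N` a closed normal subgroup, `m ≥ 2`.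
Let `D` be the topological closure of the subgroup generated by `m`-th powers of
elements of `N` and commutators `[g,n]`, `g ∈ G`, `n ∈ N`.  Then `D` is a closed normal
subgroup of `G` contained in `N`, and the substitution pairing
`N/D × H → ZMod m`, `(nD, φ) ↦ φ(n)`, where `H` is the group of `G`-invariant continuous
homomorphisms `N → ZMod m`, is well defined and perfect. -/
theorem stmt_9 {G : Type*} [Group G] [TopologicalSpace G] [IsTopologicalGroup G]
    [CompactSpace G] [T2Space G] [TotallyDisconnectedSpace G]
    (N : Subgroup G) [N.Normal] (hNclosed : IsClosed (N : Set G))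
    (m : ℕ) (hm : 2 ≤ m)
    (D : Subgroup G)
    (hD : D = (Subgroup.closure ({x : G | ∃ n ∈ N, x = n ^ m} ∪
        {x : G | ∃ g : G, ∃ n ∈ N, x = g * n * g⁻¹ * n⁻¹})).topologicalClosure)
    (Hset : Set (↥N → ZMod m))
    (hHset : Hset = {φ | (∀ a b : ↥N, φ (a * b) = φ a + φ b) ∧ Continuous φ ∧
        ∀ (g : G) (a b : ↥N), (b : G) = g * (a : G) * g⁻¹ → φ b = φ a}) :
    IsClosed (D : Set G) ∧ D.Normal ∧ D ≤ N ∧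
    ∃ F : (↥N ⧸ D.subgroupOf N) → ↥Hset → ZMod m,
      -- the pairing `(nD, φ) ↦ φ(n)` is well defined:
      (∀ (x : ↥N) (φ : ↥Hset), F (QuotientGroup.mk x) φ = φ.1 x) ∧
      -- the induced map `N/D → Hom(H, ZMod m)` is bijective:
      (∀ x y : ↥N ⧸ D.subgroupOf N, (∀ φ : ↥Hset, F x φ = F y φ) → x = y) ∧
      (∀ χ : ↥Hset → ZMod m,
        (∀ (φ ψ : ↥Hset) (h : φ.1 + ψ.1 ∈ Hset), χ ⟨φ.1 + ψ.1, h⟩ = χ φ + χ ψ) →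
        ∃ x : ↥N ⧸ D.subgroupOf N, ∀ φ, χ φ = F x φ) ∧
      -- the induced map `H → Hom_cont(N/D, ZMod m)` is bijective:
      (∀ φ ψ : ↥Hset, (∀ x, F x φ = F x ψ) → φ = ψ) ∧
      (∀ ξ : (↥N ⧸ D.subgroupOf N) → ZMod m,
        (∀ a b : ↥N, ξ (QuotientGroup.mk (a * b)) =
          ξ (QuotientGroup.mk a) + ξ (QuotientGroup.mk b)) →
        Continuous ξ → ∃ φ : ↥Hset, ∀ x, ξ x = F x φ) :=
  stmt_9_general N hNclosed m hm D hD Hset hHset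
end

section
/- Fix a finite abelian group Z of exponent dividing m and a nonempty family of central extensions (U_ω, barU_ω, λ_ω)_{ω∈Ω} of profinite groups with kernel isomorphic to Z. Let G be a profinite group and let N₁ ⊆ N₂ be closed normal subgroups of G with N₂ ⊆ barT(G). Let π₁: G → G/N₁ be the quotient homomorphism. Then the subgroup of G generated by N₁ ∪ {nᵐ : n ∈ N₂} ∪ {[g,n] : g ∈ G, n ∈ N₂} is contained in N₂ ∩ π₁⁻¹(T(G/N₁)). -/
/-!
If `n ∈ N₂` and `ρ : G ⧸ N₁ → U_ω` is continuous, then `λ_ω ∘ ρ ∘ π₁` is a continuous map to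
`barU_ω`, so it kills `n` because `N₂ ≤ barT(G)`; hence `ρ (π₁ n)` lies in the central kernel
`ker λ_ω ≅ Z`, which has exponent dividing `m`. Therefore `ρ ∘ π₁` kills `N₁`, every `n ^ m`
and every commutator `[g, n]`.
-/

/-- `TU G U` is the intersection of the kernels of all continuous homomorphisms
`ρ : G → U`, denoted `T^U(G)` in the paper. -/
def TU (G : Type*) [Group G] [TopologicalSpace G] (U : Type*) [Group U] [TopologicalSpace U] :
    Subgroup G :=
  ⨅ ρ : {ρ : G →* U // Continuous ρ}, (ρ : G →* U).ker

theorem mem_TU_iff {G U : Type*} [Group G] [TopologicalSpace G] [Group U] [TopologicalSpace U]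
    {g : G} : g ∈ TU G U ↔ ∀ ρ : G →* U, Continuous ρ → ρ g = 1 := by
  simp [TU, Subgroup.mem_iInf, MonoidHom.mem_ker]

theorem map_mem_ker_of_mem_TU {G U V : Type*} [Group G] [TopologicalSpace G] [Group U]
    [TopologicalSpace U] [Group V] [TopologicalSpace V] {g : G} (hg : g ∈ TU G V)
    {ρ : G →* U} (hρ : Continuous ρ) {lam : U →* V} (hlam : Continuous lam) :
    ρ g ∈ lam.ker :=
  mem_TU_iff.mp hg (lam.comp ρ) (hlam.comp hρ)

theorem MulEquiv.pow_eq_one_of_forall {K Z : Type*} [Monoid K] [Monoid Z] (e : K ≃* Z) {m : ℕ}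
    (hZ : ∀ z : Z, z ^ m = 1) (k : K) : k ^ m = 1 :=
  e.injective (by rw [map_pow, map_one, hZ])

section PowersCommutators

variable {G U : Type*} [Group G] [Group U]

theorem MonoidHom.map_conj_mul_inv_eq_one {f : G →* U} {n : G} (hn : f n ∈ Subgroup.center U)
    (g : G) : f (g * n * g⁻¹ * n⁻¹) = 1 := by
  rw [map_mul, map_mul, map_mul, map_inv, map_inv, (Subgroup.mem_center_iff.mp hn) (f g)]
  group

theorem Subgroup.powers_commutators_subset (N : Subgroup G) [N.Normal] (m : ℕ) :
    {x : G | ∃ n ∈ N, x = n ^ m} ∪ {x : G | ∃ g : G, ∃ n ∈ N, x = g * n * g⁻¹ * n⁻¹}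
      ⊆ N := by
  rintro x (⟨n, hn, rfl⟩ | ⟨g, n, hn, rfl⟩)
  · exact pow_mem hn m
  · exact mul_mem (‹N.Normal›.conj_mem n hn g) (inv_mem hn)

theorem powers_commutators_subset_ker {f : G →* U} {N : Subgroup G} {K : Subgroup U}
    (hKcenter : K ≤ Subgroup.center U) {m : ℕ} (hKexp : ∀ k ∈ K, k ^ m = 1)
    (hNK : N ≤ K.comap f) :
    {x : G | ∃ n ∈ N, x = n ^ m} ∪ {x : G | ∃ g : G, ∃ n ∈ N, x = g * n * g⁻¹ * n⁻¹}
      ⊆ f.ker := by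
  rintro x (⟨n, hn, rfl⟩ | ⟨g, n, hn, rfl⟩)
  · exact f.mem_ker.mpr ((map_pow f n m).trans (hKexp _ (hNK hn)))
  · exact f.map_conj_mul_inv_eq_one (hKcenter (hNK hn)) g

end PowersCommutators

theorem stmt_10_general {m : ℕ} {Z : Type*} [CommGroup Z] (hZexp : ∀ z : Z, z ^ m = 1)
    {Ω : Type*} (Uf barU : Ω → Type*)
    [∀ ω, Group (Uf ω)] [∀ ω, TopologicalSpace (Uf ω)]
    [∀ ω, Group (barU ω)] [∀ ω, TopologicalSpace (barU ω)]
    (lam : ∀ ω, Uf ω →* barU ω) (hlamcont : ∀ ω, Continuous (lam ω))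
    (hcentral : ∀ ω, (lam ω).ker ≤ Subgroup.center (Uf ω))
    (hkerZ : ∀ ω, Nonempty ((lam ω).ker ≃* Z))
    {G : Type*} [Group G] [TopologicalSpace G]
    (N₁ N₂ : Subgroup G) [N₁.Normal] [N₂.Normal]
    (h₁₂ : N₁ ≤ N₂) (hN₂ : N₂ ≤ ⨅ ω, TU G (barU ω)) :
    Subgroup.closure ((N₁ : Set G) ∪ {x : G | ∃ n ∈ N₂, x = n ^ m} ∪
        {x : G | ∃ g : G, ∃ n ∈ N₂, x = g * n * g⁻¹ * n⁻¹})
      ≤ N₂ ⊓ Subgroup.comap (QuotientGroup.mk' N₁) (⨅ ω, TU (G ⧸ N₁) (Uf ω)) := by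
  rw [Set.union_assoc]
  refine le_inf ((Subgroup.closure_le _).mpr
    (Set.union_subset h₁₂ (N₂.powers_commutators_subset m))) ?_
  simp only [TU, Subgroup.comap_iInf, MonoidHom.comap_ker, le_iInf_iff]
  rintro ω ⟨ρ, hρ⟩
  set σ : G →* Uf ω := ρ.comp (QuotientGroup.mk' N₁)
  have hN₁ : N₁ ≤ σ.ker := fun n hn => by
    simp [σ, (QuotientGroup.eq_one_iff n).mpr hn]
  have hkerExp : ∀ k ∈ (lam ω).ker, k ^ m = 1 := fun k hk =>
    congrArg Subtype.val ((hkerZ ω).some.pow_eq_one_of_forall hZexp ⟨k, hk⟩)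
  have hN₂ker : N₂ ≤ (lam ω).ker.comap σ := fun n hn =>
    map_mem_ker_of_mem_TU (Subgroup.mem_iInf.mp (hN₂ hn) ω) (hρ.comp continuous_quot_mk)
      (hlamcont ω)
  exact (Subgroup.closure_le _).mpr
    (Set.union_subset hN₁ (powers_commutators_subset_ker (hcentral ω) hkerExp hN₂ker))

/-- Fix a finite abelian group `Z` of exponent dividing `m` and a
nonempty family of central extensions `1 → Z → U_ω → barU_ω → 1` of profinite groups.
Let `G` be profinite and `N₁ ⊆ N₂` closed normal subgroups with `N₂ ⊆ barT(G)`.  Then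
the subgroup generated by `N₁`, the `m`-th powers of elements of `N₂`, and the
commutators `[g,n]` with `g ∈ G`, `n ∈ N₂`, is contained in `N₂ ∩ π₁⁻¹(T(G/N₁))`. -/
theorem stmt_10 {m : ℕ} {Z : Type*} [CommGroup Z] [Finite Z] (hZexp : ∀ z : Z, z ^ m = 1)
    {Ω : Type*} [Nonempty Ω] (Uf barU : Ω → Type*)
    [∀ ω, Group (Uf ω)] [∀ ω, TopologicalSpace (Uf ω)] [∀ ω, IsTopologicalGroup (Uf ω)]
    [∀ ω, CompactSpace (Uf ω)] [∀ ω, T2Space (Uf ω)] [∀ ω, TotallyDisconnectedSpace (Uf ω)]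
    [∀ ω, Group (barU ω)] [∀ ω, TopologicalSpace (barU ω)] [∀ ω, IsTopologicalGroup (barU ω)]
    [∀ ω, CompactSpace (barU ω)] [∀ ω, T2Space (barU ω)] [∀ ω, TotallyDisconnectedSpace (barU ω)]
    (lam : ∀ ω, Uf ω →* barU ω) (hlamcont : ∀ ω, Continuous (lam ω))
    (hlamsurj : ∀ ω, Function.Surjective (lam ω))
    (hcentral : ∀ ω, (lam ω).ker ≤ Subgroup.center (Uf ω))
    (hkerZ : ∀ ω, Nonempty ((lam ω).ker ≃* Z))
    {G : Type*} [Group G] [TopologicalSpace G] [IsTopologicalGroup G]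
    [CompactSpace G] [T2Space G] [TotallyDisconnectedSpace G]
    (N₁ N₂ : Subgroup G) [N₁.Normal] [N₂.Normal]
    (hN₁closed : IsClosed (N₁ : Set G)) (hN₂closed : IsClosed (N₂ : Set G))
    (h₁₂ : N₁ ≤ N₂) (hN₂ : N₂ ≤ ⨅ ω, TU G (barU ω)) :
    Subgroup.closure ((N₁ : Set G) ∪ {x : G | ∃ n ∈ N₂, x = n ^ m} ∪
        {x : G | ∃ g : G, ∃ n ∈ N₂, x = g * n * g⁻¹ * n⁻¹})
      ≤ N₂ ⊓ Subgroup.comap (QuotientGroup.mk' N₁) (⨅ ω, TU (G ⧸ N₁) (Uf ω)) :=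
  stmt_10_general hZexp Uf barU lam hlamcont hcentral hkerZ N₁ N₂ h₁₂ hN₂
end
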